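/- arXiv:1710.11250 — 3 statements merged into one kernel-verified Lean document; each statement's English description precedes it below -/
import Mathlib

section
/- There exists a constant C > 0 such that for every directed graph G = (V, E) on n vertices, every set S ⊆ V, and every set of pairs P ⊆ S × V with |P| · |S| ≤ n, there is a reachability preserver of (G, P) with at most C · n edges. -/
/-!
First take a skeleton `K ⊆ E` of at most `2n` edges, an in- and an out-branching in every strong
component, which keeps all mutual reachabilities. Then add an inclusion-minimal `M ⊆ E \ K` that
preserves `P`: every edge of `M` is critical for some pair of `P`, i.e. all its paths in `K ∪ M`
use that edge. For two distinct edges of `M` entering the same vertex, critical for `q₁` and `q₂`,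
the pair `(q₁, source of q₂)` determines them: with a common source, one of the two paths could be
rerouted into the vertex through the other edge; and two such configurations at different
vertices `u₁, u₂` would put `u₁, u₂` into one strong component, where `K` bypasses both critical
edges of `q₁`. Hence `|M| ≤ n + |P| |S| ≤ 2n`.
-/

/-- `t` is reachable from `s` using edges in `E`. -/
def Reaches {V : Type*} (E : Set (V × V)) (s t : V) : Prop :=
  Relation.ReflTransGen (fun u v => (u, v) ∈ E) s t

namespace Reaches

variable {α : Type*} {E F : Set (α × α)} {x y : α}

theorem mono (hEF : E ⊆ F) (h : Reaches E x y) : Reaches F x y :=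
  Relation.ReflTransGen.mono (fun _ _ huv => hEF huv) _ _ h

theorem tail_mem {e : α × α} (h : Reaches E x e.1) (he : e ∈ E) : Reaches E x e.2 :=
  Relation.ReflTransGen.tail h he

theorem image_swap_iff : Reaches (Prod.swap '' E) x y ↔ Reaches E y x := by
  rw [Set.image_swap_eq_preimage_swap]
  exact Relation.reflTransGen_swap

theorem exists_boundary_edge {p : α → Prop} (h : Reaches E x y) (hx : p x) (hy : ¬ p y) :
    ∃ e ∈ E, p e.1 ∧ ¬ p e.2 := by
  induction h with
  | refl => exact absurd hx hy
  | @tail z w _ hzw ih =>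
    by_cases hz : p z
    · exact ⟨(z, w), hzw, hz, hy⟩
    · exact ih hz

end Reaches

def withoutEdgesInto {α : Type*} (H : Set (α × α)) (v : α) : Set (α × α) :=
  {e ∈ H | e.2 ≠ v}

def Critical {α : Type*} (H : Set (α × α)) (e : α × α) (s t : α) : Prop :=
  Reaches H s t ∧ ¬ Reaches (H \ {e}) s t

section Critical

variable {α : Type*} {H : Set (α × α)} {e f f₁ f₂ e₁ e₂ : α × α} {a s t x y y₁ y₂ : α}

theorem withoutEdgesInto_subset_sdiff (he : e.2 = x) : withoutEdgesInto H x ⊆ H \ {e} :=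
  fun _ hf => ⟨hf.1, fun hfe => hf.2 (hfe ▸ he)⟩

theorem withoutEdgesInto_anti (v : α) {G : Set (α × α)} (h : G ⊆ H) :
    withoutEdgesInto G v ⊆ withoutEdgesInto H v :=
  fun _ hf => ⟨h hf.1, hf.2⟩

theorem Reaches.withoutEdgesInto_or (v : α) (h : Reaches H x y) :
    Reaches (withoutEdgesInto H v) x y ∨
      (∃ e ∈ H, e.2 = v ∧ Reaches (withoutEdgesInto H v) x e.1) ∧
        Reaches (withoutEdgesInto H v) v y := by
  induction h with
  | refl => exact Or.inl .refl
  | @tail z w _ hzw ih =>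
    by_cases hw : w = v
    · subst hw
      refine Or.inr ⟨?_, .refl⟩
      rcases ih with hz | ⟨hz, -⟩
      · exact ⟨(z, w), hzw, rfl, hz⟩
      · exact hz
    · have hzw' : (z, w) ∈ withoutEdgesInto H v := ⟨hzw, hw⟩
      rcases ih with hz | ⟨hz, hv⟩
      · exact Or.inl (hz.tail hzw')
      · exact Or.inr ⟨hz, hv.tail hzw'⟩

theorem Critical.mem (h : Critical H e s t) : e ∈ H := by
  by_contra he
  exact h.2 (by rw [Set.sdiff_singleton_eq_self he]; exact h.1)

theorem Critical.reaches_withoutEdgesInto (h : Critical H e s t) :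
    Reaches (withoutEdgesInto H e.2) s e.1 ∧ Reaches (withoutEdgesInto H e.2) e.2 t := by
  have hsub := withoutEdgesInto_subset_sdiff (H := H) (rfl : e.2 = e.2)
  rcases h.1.withoutEdgesInto_or e.2 with hst | ⟨⟨e', he', hhead, hs⟩, ht⟩
  · exact absurd (hst.mono hsub) h.2
  · obtain rfl : e' = e := by
      by_contra hne
      have hs' : Reaches (H \ {e}) s e'.2 := (hs.mono hsub).tail_mem ⟨he', hne⟩
      exact h.2 (hs'.trans (hhead ▸ ht.mono hsub))
    exact ⟨hs, ht⟩

theorem Critical.reaches_sdiff (h : Critical H e s t) :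
    Reaches (H \ {e}) s e.1 ∧ Reaches (H \ {e}) e.2 t :=
  have hsub := withoutEdgesInto_subset_sdiff (H := H) (rfl : e.2 = e.2)
  ⟨h.reaches_withoutEdgesInto.1.mono hsub, h.reaches_withoutEdgesInto.2.mono hsub⟩

theorem Critical.eq_of_snd_eq (hf₁ : Critical H f₁ a y₁) (hf₂ : Critical H f₂ a y₂)
    (h : f₁.2 = f₂.2) : f₁ = f₂ := by
  by_contra hne
  have hsub := withoutEdgesInto_subset_sdiff (H := H) (rfl : f₂.2 = f₂.2)
  have ha := hf₁.reaches_withoutEdgesInto.1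
  rw [h] at ha
  have ha' : Reaches (H \ {f₂}) a f₁.2 := (ha.mono hsub).tail_mem ⟨hf₁.mem, hne⟩
  exact hf₂.2 (ha'.trans (h ▸ hf₂.reaches_withoutEdgesInto.2.mono hsub))

theorem Critical.reaches_of_reaches_sdiff (hf₁ : Critical H f₁ a y₁) (hf₂ : Critical H f₂ a y₂)
    (hne : f₁ ≠ f₂) (h : Reaches (H \ {f₁}) f₂.2 f₁.2) : Reaches H f₁.2 f₂.2 := by
  have ha : Reaches H a f₂.1 := hf₂.reaches_sdiff.1.mono Set.sdiff_subset
  by_cases ha' : Reaches (H \ {f₁}) a f₂.1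
  · exact absurd ((ha'.tail_mem ⟨hf₂.mem, hne.symm⟩).trans (h.trans hf₁.reaches_sdiff.2)) hf₁.2
  · exact (Critical.reaches_sdiff ⟨ha, ha'⟩).2.mono Set.sdiff_subset |>.tail_mem hf₂.mem

theorem Critical.false_of_reaches_sdiff (he₁ : Critical H e₁ s t) (he₂ : Critical H e₂ s t)
    (hne : e₁ ≠ e₂) (h₁₂ : Reaches (H \ {e₂}) e₁.2 e₂.2) (h₂₁ : Reaches (H \ {e₁}) e₂.2 e₁.2) :
    False := by
  have hs : Reaches (H \ {e₁}) s e₁.1 := he₁.reaches_sdiff.1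
  by_cases hs' : Reaches ((H \ {e₁}) \ {e₂}) s e₁.1
  · have hs'' : Reaches (H \ {e₂}) s e₁.1 := hs'.mono (Set.sdiff_subset_sdiff_left Set.sdiff_subset)
    exact he₂.2 (((hs''.tail_mem ⟨he₁.mem, hne⟩).trans h₁₂).trans he₂.reaches_sdiff.2)
  · have hs'' := (Critical.reaches_sdiff ⟨hs, hs'⟩).1.mono Set.sdiff_subset
    exact he₁.2 (((hs''.tail_mem ⟨he₂.mem, hne.symm⟩).trans h₂₁).trans he₁.reaches_sdiff.2)

theorem insert_withoutEdgesInto_subset (he : e ∈ H) : insert e (withoutEdgesInto H e.2) ⊆ H :=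
  Set.insert_subset he (Set.sep_subset _ _)

theorem insert_withoutEdgesInto_subset_sdiff (he : e ∈ H) (hne : f ≠ e) (h : f.2 = e.2) :
    insert e (withoutEdgesInto H e.2) ⊆ H \ {f} :=
  Set.insert_subset ⟨he, hne.symm⟩ (withoutEdgesInto_subset_sdiff h)

/-- The two heads are ordered along a simple `s`-`t` path, and the segment between them enters
the later head only through its critical edge. -/
theorem Critical.reaches_insert_or (he₁ : Critical H e₁ s t) (he₂ : Critical H e₂ s t)
    (hu : e₁.2 ≠ e₂.2) :
    Reaches (insert e₁ (withoutEdgesInto H e₁.2)) e₂.2 e₁.2 ∨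
      Reaches (insert e₂ (withoutEdgesInto H e₂.2)) e₁.2 e₂.2 := by
  set H₂ := withoutEdgesInto H e₂.2
  obtain ⟨hs, ht⟩ := he₂.reaches_withoutEdgesInto
  have hH₂ : H₂ \ {e₁} ⊆ H \ {e₁} := Set.sdiff_subset_sdiff_left (Set.sep_subset _ _)
  by_cases hs' : Reaches (H₂ \ {e₁}) s e₂.1
  · by_cases ht' : Reaches (H₂ \ {e₁}) e₂.2 t
    · refine absurd (((hs'.mono hH₂).tail_mem ⟨he₂.mem, ?_⟩).trans (ht'.mono hH₂)) he₁.2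
      rintro rfl
      exact hu rfl
    · left
      have h := (Critical.reaches_withoutEdgesInto (H := H₂) ⟨ht, ht'⟩).1
      exact (h.mono ((withoutEdgesInto_anti _ (Set.sep_subset _ _)).trans
        (Set.subset_insert _ _))).tail_mem (Set.mem_insert _ _)
  · right
    have h := (Critical.reaches_withoutEdgesInto (H := H₂) ⟨hs, hs'⟩).2
    exact (h.mono ((Set.sep_subset _ _).trans (Set.subset_insert _ _))).tail_mem
      (Set.mem_insert _ _)

theorem Critical.false_of_crossing {K : Set (α × α)} (hKH : K ⊆ H) (he₁K : e₁ ∉ K)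
    (he₂K : e₂ ∉ K) (hK : ∀ u v, Reaches H u v → Reaches H v u → Reaches K u v)
    (he₁ : Critical H e₁ s t) (he₂ : Critical H e₂ s t)
    (hf₁ : Critical H f₁ a y₁) (hf₂ : Critical H f₂ a y₂)
    (h₁ : f₁.2 = e₁.2) (h₂ : f₂.2 = e₂.2) (hne₁ : f₁ ≠ e₁) (hne₂ : f₂ ≠ e₂)
    (hu : e₁.2 ≠ e₂.2) : False := by
  have hf : f₁ ≠ f₂ := fun h => hu (h₁ ▸ h₂ ▸ congrArg Prod.snd h)
  have hmutual : Reaches H e₁.2 e₂.2 ∧ Reaches H e₂.2 e₁.2 := by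
    rcases he₁.reaches_insert_or he₂ hu with h | h
    · refine ⟨?_, h.mono (insert_withoutEdgesInto_subset he₁.mem)⟩
      have h' : Reaches (H \ {f₁}) f₂.2 f₁.2 :=
        h₁ ▸ h₂ ▸ h.mono (insert_withoutEdgesInto_subset_sdiff he₁.mem hne₁ h₁)
      exact h₁ ▸ h₂ ▸ hf₁.reaches_of_reaches_sdiff hf₂ hf h'
    · refine ⟨h.mono (insert_withoutEdgesInto_subset he₂.mem), ?_⟩
      have h' : Reaches (H \ {f₂}) f₁.2 f₂.2 :=
        h₁ ▸ h₂ ▸ h.mono (insert_withoutEdgesInto_subset_sdiff he₂.mem hne₂ h₂)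
      exact h₁ ▸ h₂ ▸ hf₂.reaches_of_reaches_sdiff hf₁ hf.symm h'
  refine he₁.false_of_reaches_sdiff he₂ (fun h => hu (congrArg Prod.snd h)) ?_ ?_
  · exact (hK _ _ hmutual.1 hmutual.2).mono (Set.subset_sdiff_singleton hKH he₂K)
  · exact (hK _ _ hmutual.2 hmutual.1).mono (Set.subset_sdiff_singleton hKH he₁K)

end Critical

open Finset

section Finite

variable {α : Type*} [DecidableEq α]

theorem exists_outTree (F : Finset (α × α)) (r : α) (C : Finset α) (hr : r ∈ C)
    (hF : ∀ e ∈ F, e.2 ∈ C) :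
    ∃ T ⊆ F, T.card < C.card ∧ ∀ v, Reaches F r v → Reaches T r v := by
  classical
  -- Among edge sets with fewer edges than vertices they reach, one of largest reach reaches
  -- everything: otherwise an edge leaving its reach could be added.
  set R : Finset (α × α) → Finset α := fun T => C.filter (Reaches T r)
  have hR : ∀ T, r ∈ R T := fun T => mem_filter.2 ⟨hr, .refl⟩
  obtain ⟨T, hT, hmax⟩ := (F.powerset.filter fun T => T.card < (R T).card).exists_max_image
    (fun T => (R T).card) ⟨∅, mem_filter.2 ⟨empty_mem_powerset F, card_pos.2 ⟨r, hR ∅⟩⟩⟩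
  rw [mem_filter, mem_powerset] at hT
  refine ⟨T, hT.1, hT.2.trans_le (card_filter_le _ _), fun v hv => ?_⟩
  by_contra hTv
  obtain ⟨⟨u, w⟩, huw, hu, hw⟩ := hv.exists_boundary_edge (p := Reaches T r) .refl hTv
  set T' := insert (u, w) T
  have hTT' : (T : Set (α × α)) ⊆ T' := coe_subset.2 (subset_insert _ _)
  have hRT' : R T ⊂ R T' := by
    refine (ssubset_iff_of_subset fun v hv => ?_).2 ⟨w, ?_, fun hw' => hw (mem_filter.1 hw').2⟩
    · exact mem_filter.2 ⟨(mem_filter.1 hv).1, (mem_filter.1 hv).2.mono hTT'⟩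
    · exact mem_filter.2 ⟨hF _ huw, (hu.mono hTT').tail_mem (mem_insert_self _ _)⟩
  have hT' : T'.card < (R T').card :=
    (card_insert_le _ _).trans_lt ((Nat.add_lt_add_right hT.2 1).trans_le (card_lt_card hRT'))
  exact (card_lt_card hRT').not_ge
    (hmax T' (mem_filter.2 ⟨mem_powerset.2 (insert_subset huw hT.1), hT'⟩))

theorem exists_skeleton_of_component (E : Finset (α × α)) (r : α) (C : Finset α)
    (hC : ∀ v, v ∈ C ↔ Reaches E r v ∧ Reaches E v r) :
    ∃ K ⊆ E, K.card ≤ 2 * C.card ∧ ∀ u ∈ C, ∀ v ∈ C, Reaches (K : Set (α × α)) u v := by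
  set F := E.filter fun e => e.1 ∈ C ∧ e.2 ∈ C
  have hr : r ∈ C := (hC r).2 ⟨.refl, .refl⟩
  have hinside : ∀ u v, Reaches E u v → u ∈ C → v ∈ C → Reaches F u v := by
    intro u v h
    induction h using Relation.ReflTransGen.head_induction_on with
    | refl => exact fun _ _ => .refl
    | @head x w hxw hwv ih =>
      intro hx hv
      have hw : w ∈ C := (hC w).2 ⟨((hC x).1 hx).1.tail hxw, hwv.trans ((hC v).1 hv).2⟩
      exact .head (mem_filter.2 ⟨hxw, hx, hw⟩) (ih hw hv)
  obtain ⟨Tout, hToutF, hTout_card, hTout⟩ :=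
    exists_outTree F r C hr fun e he => (mem_filter.1 he).2.2
  obtain ⟨Tin, hTinF, hTin_card, hTin⟩ :=
    exists_outTree (F.image Prod.swap) r C hr fun e he => by
      obtain ⟨e', he', rfl⟩ := mem_image.1 he
      exact (mem_filter.1 he').2.1
  refine ⟨Tout ∪ Tin.image Prod.swap, ?_, ?_, fun u hu v hv => ?_⟩
  · refine union_subset (hToutF.trans (filter_subset _ _)) ?_
    calc Tin.image Prod.swap ⊆ (F.image Prod.swap).image Prod.swap := image_subset_image hTinF
      _ = F := by simp [image_image]
      _ ⊆ E := filter_subset _ _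
  · have := card_union_le Tout (Tin.image Prod.swap)
    have := card_image_le (s := Tin) (f := Prod.swap)
    omega
  · have hur : Reaches (Tin.image Prod.swap) u r := by
      rw [coe_image, Reaches.image_swap_iff]
      refine hTin u ?_
      rw [coe_image, Reaches.image_swap_iff]
      exact hinside u r ((hC u).1 hu).2 hu hr
    have hrv : Reaches Tout r v := hTout v (hinside r v ((hC v).1 hv).1 hr hv)
    rw [coe_union]
    exact (hur.mono Set.subset_union_right).trans (hrv.mono Set.subset_union_left)

def mutualReach (E : Set (α × α)) : Setoid α where
  r u v := Reaches E u v ∧ Reaches E v u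
  iseqv := ⟨fun _ => ⟨.refl, .refl⟩, fun h => ⟨h.2, h.1⟩,
    fun h h' => ⟨h.1.trans h'.1, h'.2.trans h.2⟩⟩

theorem exists_skeleton [Fintype α] (E : Finset (α × α)) :
    ∃ K ⊆ E, K.card ≤ 2 * Fintype.card α ∧
      ∀ u v, Reaches (E : Set (α × α)) u v → Reaches (E : Set (α × α)) v u →
        Reaches (K : Set (α × α)) u v := by
  classical
  let s := mutualReach (E : Set (α × α))
  let C : Quotient s → Finset α := fun c => univ.filter fun v => Quotient.mk s v = c
  have hC : ∀ c v, v ∈ C c ↔ Reaches E c.out v ∧ Reaches E v c.out := fun c v => by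
    conv_lhs => rw [← c.out_eq]
    simp only [C, mem_filter, mem_univ, true_and, Quotient.eq]
    exact And.comm
  choose K hKE hKcard hK using fun c => exists_skeleton_of_component E c.out (C c) (hC c)
  refine ⟨univ.biUnion K, biUnion_subset.2 fun c _ => hKE c, ?_, fun u v huv hvu => ?_⟩
  · calc (univ.biUnion K).card ≤ ∑ c, (K c).card := card_biUnion_le
      _ ≤ ∑ c, 2 * (C c).card := sum_le_sum fun c _ => hKcard c
      _ = 2 * Fintype.card α := by
        rw [← mul_sum, ← card_univ, card_eq_sum_card_fiberwise (f := Quotient.mk s) (t := univ)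
          (fun _ _ => mem_coe.2 (mem_univ _))]
  · have hu : u ∈ C (Quotient.mk s u) := by simp [C]
    have hv : v ∈ C (Quotient.mk s u) := by
      simpa [C] using Quotient.sound (s := s) (a := v) (b := u) ⟨hvu, huv⟩
    exact (hK _ u hu v hv).mono (coe_subset.2 (subset_biUnion_of_mem K (mem_univ _)))

theorem exists_critical_augmentation (K E P : Finset (α × α)) :
    ∃ M ⊆ E \ K, (∀ q ∈ P, Reaches (E : Set (α × α)) q.1 q.2 →
        Reaches ((K ∪ M : Finset (α × α)) : Set (α × α)) q.1 q.2) ∧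
      ∀ f ∈ M, ∃ q ∈ P, Critical ((K ∪ M : Finset (α × α)) : Set (α × α)) f q.1 q.2 := by
  classical
  let Preserves (M : Finset (α × α)) : Prop := ∀ q ∈ P, Reaches (E : Set (α × α)) q.1 q.2 →
    Reaches ((K ∪ M : Finset (α × α)) : Set (α × α)) q.1 q.2
  have hE : Preserves (E \ K) := fun q _ h => h.mono (by simp)
  obtain ⟨M, hM, hmin⟩ := ((E \ K).powerset.filter Preserves).exists_min_image card
    ⟨E \ K, mem_filter.2 ⟨mem_powerset_self _, hE⟩⟩
  rw [mem_filter, mem_powerset] at hM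
  refine ⟨M, hM.1, hM.2, fun f hf => ?_⟩
  by_contra! hcrit
  have herase : Preserves (M.erase f) := fun q hq h => by
    have h' := not_and_not_right.1 (hcrit q hq) (hM.2 q hq h)
    exact h'.mono fun e he => by simp_all
  exact (card_erase_lt_of_mem hf).not_ge
    (hmin _ (mem_filter.2 ⟨mem_powerset.2 ((erase_subset _ _).trans hM.1), herase⟩))

theorem card_le_card_add_card_sameHead [Fintype α] (M : Finset (α × α)) :
    M.card ≤ Fintype.card α + (M.offDiag.filter fun p => p.1.2 = p.2.2).card := by
  rw [card_eq_sum_card_fiberwise (f := Prod.snd) (t := univ) (fun _ _ => mem_coe.2 (mem_univ _)),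
    card_eq_sum_card_fiberwise (f := fun p => p.1.2) (t := univ)
      (s := M.offDiag.filter _) (fun _ _ => mem_coe.2 (mem_univ _)),
    ← card_univ, card_eq_sum_ones, ← sum_add_distrib]
  gcongr with v
  have hfiber : ((M.offDiag.filter fun p => p.1.2 = p.2.2).filter fun p => p.1.2 = v) =
      (M.filter fun e => e.2 = v).offDiag := by
    ext p
    simp only [mem_filter, mem_offDiag]
    constructor
    · rintro ⟨⟨⟨h₁, h₂, hne⟩, hh⟩, rfl⟩
      exact ⟨⟨h₁, rfl⟩, ⟨h₂, hh.symm⟩, hne⟩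
    · rintro ⟨⟨h₁, hv₁⟩, ⟨h₂, hv₂⟩, hne⟩
      exact ⟨⟨⟨h₁, h₂, hne⟩, hv₁.trans hv₂.symm⟩, hv₁⟩
  rw [hfiber, offDiag_card]
  generalize (M.filter fun e => e.2 = v).card = d
  rcases d with _ | d
  · simp
  · have hsq : (d + 1) * (d + 1) = d * d + 2 * d + 1 := by ring
    generalize d * d = d2 at hsq
    omega

theorem card_sameHead_le_of_critical {H K : Set (α × α)} {M P : Finset (α × α)} {S : Finset α}
    (hKH : K ⊆ H) (hMK : ∀ f ∈ M, f ∉ K)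
    (hK : ∀ u v, Reaches H u v → Reaches H v u → Reaches K u v)
    (hPS : ∀ q ∈ P, q.1 ∈ S) (hcrit : ∀ f ∈ M, ∃ q ∈ P, Critical H f q.1 q.2) :
    (M.offDiag.filter fun p => p.1.2 = p.2.2).card ≤ P.card * S.card := by
  choose! c hcP hc using hcrit
  rw [← card_product]
  refine card_le_card_of_injOn (fun p => (c p.1, (c p.2).1)) (fun p hp => ?_) ?_
  · obtain ⟨⟨h₁, h₂, -⟩, -⟩ := mem_filter.1 hp |>.imp_left mem_offDiag.1
    exact mem_product.2 ⟨hcP _ h₁, hPS _ (hcP _ h₂)⟩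
  rintro ⟨f₁, g₁⟩ hp ⟨f₂, g₂⟩ hq hpq
  obtain ⟨⟨hf₁, hg₁, hne₁⟩, hh₁⟩ := mem_filter.1 hp |>.imp_left mem_offDiag.1
  obtain ⟨⟨hf₂, hg₂, hne₂⟩, hh₂⟩ := mem_filter.1 hq |>.imp_left mem_offDiag.1
  obtain ⟨hpair, hsrc⟩ := Prod.ext_iff.1 hpq
  dsimp only at hpair hsrc hh₁ hh₂ hne₁ hne₂
  have cf₂ := hpair ▸ hc f₂ hf₂
  have cg₂ := hsrc ▸ hc g₂ hg₂
  by_cases hh : f₁.2 = f₂.2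
  · exact Prod.ext ((hc f₁ hf₁).eq_of_snd_eq cf₂ hh)
      ((hc g₁ hg₁).eq_of_snd_eq cg₂ (hh₁.symm.trans (hh.trans hh₂)))
  · exact (Critical.false_of_crossing hKH (hMK _ hf₁) (hMK _ hf₂) hK (hc f₁ hf₁) cf₂
      (hc g₁ hg₁) cg₂ hh₁.symm hh₂.symm hne₁.symm hne₂.symm hh).elim

end Finite

theorem linear_size_reachability_preservers :
    ∃ C : ℝ, 0 < C ∧
      ∀ (V : Type) [Fintype V]
        (E : Finset (V × V)) (S : Finset V) (P : Finset (V × V)),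
        (∀ q ∈ P, q.1 ∈ S) →
        P.card * S.card ≤ Fintype.card V →
        ∃ EH ⊆ E,
          (∀ q ∈ P, Reaches (EH : Set (V × V)) q.1 q.2 ↔ Reaches (E : Set (V × V)) q.1 q.2) ∧
          (EH.card : ℝ) ≤ C * (Fintype.card V : ℝ) := by
  refine ⟨4, by norm_num, fun V _ E S P hPS hcard => ?_⟩
  classical
  obtain ⟨K, hKE, hKcard, hK⟩ := exists_skeleton E
  obtain ⟨M, hME, hMP, hMcrit⟩ := exists_critical_augmentation K E P
  have hHE : ((K ∪ M : Finset (V × V)) : Set (V × V)) ⊆ E :=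
    coe_subset.2 (union_subset hKE (hME.trans sdiff_subset))
  have hMcard : M.card ≤ Fintype.card V + P.card * S.card :=
    (card_le_card_add_card_sameHead M).trans <| Nat.add_le_add_left
      (card_sameHead_le_of_critical (coe_subset.2 subset_union_left)
        (fun f hf => (mem_sdiff.1 (hME hf)).2)
        (fun u v h h' => hK u v (h.mono hHE) (h'.mono hHE)) hPS hMcrit) _
  refine ⟨K ∪ M, coe_subset.1 hHE, fun q hq => ⟨fun h => h.mono hHE, hMP q hq⟩, ?_⟩
  have : (K ∪ M).card ≤ 4 * Fintype.card V := (card_union_le K M).trans (by omega)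
  exact_mod_cast this
end

section
/- Let W be a real inner product space, let a ∈ W with ‖a‖ > 0, let k be a natural number, and let δ be a real number with 0 ≤ δ and (k + 1) · (‖a‖ − δ) > k · ‖a‖. Let A ⊆ W be a set of vectors such that every e ∈ A satisfies (‖a‖ − δ) · ‖a‖ ≤ ⟪e, a⟫ ≤ ‖a‖², and ⟪e, a⟫ = ‖a‖² implies e = a. Then for every natural number m and every function e : Fin m → W with e(i) ∈ A for all i and ∑_{i} e(i) = k • a, it holds that m = k and e(i) = a for all i. -/
/-! Pairing the path with `a` turns it into real numbers `⟪e i, a⟫ ∈ [(‖a‖ - δ)‖a‖, ‖a‖²]`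
summing to `k‖a‖²`. The upper bound forces `m ≥ k`, the lower bound together with
`(k + 1)(‖a‖ - δ) > k‖a‖` forces `m ≤ k`, and once `m = k` the sum can only reach `k‖a‖²`
if every term equals `‖a‖²`, i.e. every step is `a`. -/

namespace Finset

variable {ι : Type*} (s : Finset ι) (f : ι → ℝ)

theorem le_card_of_forall_le_of_le_sum {u : ℝ} (hu : 0 < u) (hf : ∀ i ∈ s, f i ≤ u) {k : ℕ}
    (hsum : k * u ≤ ∑ i ∈ s, f i) : k ≤ #s := by
  have : (k : ℝ) * u ≤ #s * u := by
    simpa only [nsmul_eq_mul] using hsum.trans (s.sum_le_card_nsmul f u hf)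
  exact_mod_cast le_of_mul_le_mul_right this hu

theorem card_le_of_forall_le_of_sum_lt {l : ℝ} (hl : 0 < l) (hf : ∀ i ∈ s, l ≤ f i) {k : ℕ}
    (hsum : ∑ i ∈ s, f i < (k + 1) * l) : #s ≤ k := by
  have : (#s : ℝ) * l < (k + 1) * l := by
    simpa only [nsmul_eq_mul] using (s.card_nsmul_le_sum f l hf).trans_lt hsum
  exact Nat.lt_succ_iff.mp (by exact_mod_cast lt_of_mul_lt_mul_right this hl.le)

end Finset

theorem unique_canonical_path_core_general
    {W : Type*} [NormedAddCommGroup W] [InnerProductSpace ℝ W]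
    (a : W) (ha : 0 < ‖a‖) (k : ℕ) (δ : ℝ)
    (hkδ : ((k : ℝ) + 1) * (‖a‖ - δ) > (k : ℝ) * ‖a‖)
    (A : Set W)
    (hA : ∀ e ∈ A, (‖a‖ - δ) * ‖a‖ ≤ (inner ℝ e a : ℝ) ∧ (inner ℝ e a : ℝ) ≤ ‖a‖ ^ 2 ∧
      ((inner ℝ e a : ℝ) = ‖a‖ ^ 2 → e = a)) :
    ∀ (m : ℕ) (e : Fin m → W), (∀ i, e i ∈ A) → (∑ i, e i) = k • a →
      m = k ∧ ∀ i, e i = a := by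
  intro m e he hsum
  have hpair : ∑ i, (inner ℝ (e i) a : ℝ) = k * ‖a‖ ^ 2 := by
    rw [← sum_inner, hsum, ← Nat.cast_smul_eq_nsmul ℝ, real_inner_smul_left,
      real_inner_self_eq_norm_sq]
  have hgap : 0 < ‖a‖ - δ := by nlinarith
  have hkm : k ≤ m := by
    simpa using Finset.univ.le_card_of_forall_le_of_le_sum _ (by positivity)
      (fun i _ => (hA _ (he i)).2.1) hpair.ge
  have hmk : m ≤ k := by
    simpa using Finset.univ.card_le_of_forall_le_of_sum_lt _ (by positivity)
      (fun i _ => (hA _ (he i)).1) (by rw [hpair]; nlinarith)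
  obtain rfl : m = k := le_antisymm hmk hkm
  have hsat : ∀ i ∈ Finset.univ, (inner ℝ (e i) a : ℝ) = ‖a‖ ^ 2 :=
    (Finset.sum_eq_sum_iff_of_le fun i _ => (hA _ (he i)).2.1).mp (by simp [hpair])
  exact ⟨rfl, fun i => (hA _ (he i)).2.2 (hsat i (Finset.mem_univ i))⟩

theorem unique_canonical_path_core
    {W : Type*} [NormedAddCommGroup W] [InnerProductSpace ℝ W]
    (a : W) (ha : 0 < ‖a‖) (k : ℕ) (δ : ℝ) (hδ : 0 ≤ δ)
    (hkδ : ((k : ℝ) + 1) * (‖a‖ - δ) > (k : ℝ) * ‖a‖)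
    (A : Set W)
    (hA : ∀ e ∈ A, (‖a‖ - δ) * ‖a‖ ≤ (inner ℝ e a : ℝ) ∧ (inner ℝ e a : ℝ) ≤ ‖a‖ ^ 2 ∧
      ((inner ℝ e a : ℝ) = ‖a‖ ^ 2 → e = a)) :
    ∀ (m : ℕ) (e : Fin m → W), (∀ i, e i ∈ A) → (∑ i, e i) = k • a →
      m = k ∧ ∀ i, e i = a :=
  unique_canonical_path_core_general a ha k δ hkδ A hA
end

section
/- Let G be a finite simple undirected graph on vertex set V, let L ≥ 2 be an integer, and let P be a set of ordered vertex pairs such that: (i) for every (s, t) ∈ P, the graph distance from s to t in G equals L, and there is exactly one path (walk with no repeated vertices) in G from s to t of length L, denoted π(s, t); (ii) for distinct pairs of P, the paths π are pairwise edge-disjoint. Define the layered directed graph G' on vertex set V × {1, …, 2L} with a directed edge from (u, i) to (v, i+1) whenever {u, v} is an edge of G and 1 ≤ i ≤ 2L − 1, and define P' = {((s, j), (t, j + L)) : (s, t) ∈ P, 1 ≤ j ≤ L}. Then every reachability preserver of (G', P') has at least |P| · L · (L − 1) edges. -/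
/-- The layered directed graph obtained from an undirected graph `G`: vertices are
pairs `(u, i)` with `i` a layer in `{0, …, 2L-1}` (0-indexed), with a directed edge
from `(u, i)` to `(v, i+1)` whenever `{u, v}` is an edge of `G`. -/
def layerEdges {V : Type*} [Fintype V] [DecidableEq V]
    (G : SimpleGraph V) [DecidableRel G.Adj] (L : ℕ) :
    Finset ((V × Fin (2 * L)) × (V × Fin (2 * L))) :=
  Finset.univ.filter (fun e => G.Adj e.1.1 e.2.1 ∧ (e.2.2 : ℕ) = (e.1.2 : ℕ) + 1)

/-- The layered pair set: for each pair `(s, t) ∈ P` and each layer `j` with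
`0 ≤ j ≤ L - 1` (0-indexed, corresponding to `1 ≤ j ≤ L` 1-indexed), the pair
`((s, j), (t, j + L))`. -/
def layerPairs {V : Type*} [Fintype V] [DecidableEq V] (L : ℕ) (P : Finset (V × V)) :
    Finset ((V × Fin (2 * L)) × (V × Fin (2 * L))) :=
  Finset.univ.filter (fun q => (q.1.1, q.2.1) ∈ P ∧ (q.1.2 : ℕ) < L ∧
    (q.2.2 : ℕ) = (q.1.2 : ℕ) + L)

open SimpleGraph Finset

section Layered

variable {V : Type*} {G : SimpleGraph V} {L : ℕ}

def IsLayerStep {a b : V} (w : G.Walk a b) (j i : ℕ)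
    (e : (V × Fin (2 * L)) × (V × Fin (2 * L))) : Prop :=
  e.1.1 = w.getVert i ∧ e.2.1 = w.getVert (i + 1) ∧ (e.1.2 : ℕ) = j + i

lemma IsLayerStep.mk_mem_edges {a b : V} {w : G.Walk a b} {j i : ℕ}
    {e : (V × Fin (2 * L)) × (V × Fin (2 * L))} (he : IsLayerStep w j i e) (hi : i < w.length) :
    s(e.1.1, e.2.1) ∈ w.edges := by
  rw [he.1, he.2.1]
  exact w.mk_mem_edges_iff_exists.2 ⟨i, hi, rfl⟩

lemma mul_length_le_card_of_isLayerStep {a b : V} {π : G.Walk a b} (hπ : π.IsPath)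
    {A : Finset ((V × Fin (2 * L)) × (V × Fin (2 * L)))} {m : ℕ}
    (h : ∀ j < m, ∀ i < π.length, ∃ e ∈ A, IsLayerStep π j i e) :
    m * π.length ≤ A.card := by
  choose f hfA hf using h
  calc m * π.length = (univ : Finset (Fin m × Fin π.length)).card := by simp
    _ ≤ A.card := by
      refine card_le_card_of_injOn (fun ji => f ji.1 ji.1.2 ji.2 ji.2.2)
        (fun ji _ => hfA _ _ _ _) ?_
      rintro ⟨j, i⟩ - ⟨j', i'⟩ - heq
      obtain ⟨hv, -, hl⟩ := hf j j.2 i i.2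
      obtain ⟨hv', -, hl'⟩ := hf j' j'.2 i' i'.2
      dsimp only at heq
      rw [heq] at hv hl
      have hii : (i : ℕ) = i' :=
        hπ.getVert_injOn (by simp) (by simp) (hv.symm.trans hv')
      ext <;> simp only <;> omega

variable [Fintype V] [DecidableEq V] [DecidableRel G.Adj]

lemma reaches_layerEdges_of_walk {a b : V} (w : G.Walk a b) {j k : Fin (2 * L)}
    (h : (j : ℕ) + w.length = k) :
    Reaches (layerEdges G L : Set ((V × Fin (2 * L)) × (V × Fin (2 * L)))) (a, j) (b, k) := by
  induction w generalizing j with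
  | nil =>
    obtain rfl : j = k := Fin.ext (by simpa using h)
    exact .refl
  | cons hadj w ih =>
    rw [Walk.length_cons] at h
    refine .head ?_ (ih (j := ⟨j + 1, by omega⟩) (by simp only; omega))
    simp [layerEdges, hadj]

lemma exists_walk_of_reaches {EH : Finset ((V × Fin (2 * L)) × (V × Fin (2 * L)))}
    (hEH : EH ⊆ layerEdges G L) {x y : V × Fin (2 * L)}
    (h : Reaches (EH : Set ((V × Fin (2 * L)) × (V × Fin (2 * L)))) x y) :
    ∃ w : G.Walk x.1 y.1, (x.2 : ℕ) + w.length = y.2 ∧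
      ∀ i < w.length, ∃ e ∈ EH, IsLayerStep w x.2 i e := by
  induction h using Relation.ReflTransGen.head_induction_on with
  | refl => exact ⟨.nil, by simp, by simp⟩
  | @head x c hxc _ ih =>
    obtain ⟨w, hlen, hsteps⟩ := ih
    obtain ⟨hadj, hlayer⟩ : G.Adj x.1 c.1 ∧ (c.2 : ℕ) = x.2 + 1 := by
      simpa [layerEdges] using hEH hxc
    refine ⟨.cons hadj w, by simp; omega, fun i hi => ?_⟩
    cases i with
    | zero => exact ⟨(x, c), hxc, by simp [IsLayerStep]⟩
    | succ i =>
      obtain ⟨e, he, h1, h2, h3⟩ := hsteps i (by simpa using hi)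
      exact ⟨e, he, by simpa using h1, by simpa using h2, by omega⟩

lemma exists_layerStep_mem_of_reaches {EH : Finset ((V × Fin (2 * L)) × (V × Fin (2 * L)))}
    (hEH : EH ⊆ layerEdges G L) {s t : V} {n : ℕ} (hdist : G.dist s t = n) {π : G.Path s t}
    (huniq : ∀ π' : G.Path s t, (π' : G.Walk s t).length = n → π' = π)
    {j k : Fin (2 * L)} (hjk : (j : ℕ) + n = k)
    (h : Reaches (EH : Set ((V × Fin (2 * L)) × (V × Fin (2 * L)))) (s, j) (t, k)) :
    ∀ i < n, ∃ e ∈ EH, IsLayerStep (π : G.Walk s t) j i e := by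
  obtain ⟨w, hlen, hsteps⟩ := exists_walk_of_reaches hEH h
  have hw : w.length = n := by simp only at hlen; omega
  obtain rfl : ⟨w, w.isPath_of_length_eq_dist (hw.trans hdist.symm)⟩ = π := huniq _ hw
  exact fun i hi => hsteps i (hw ▸ hi)

end Layered

theorem layered_reachability_lower_bound_general
    {V : Type*} [Fintype V] [DecidableEq V]
    (G : SimpleGraph V) [DecidableRel G.Adj]
    (L : ℕ)
    (P : Finset (V × V))
    (hdist : ∀ q ∈ P, G.dist q.1 q.2 = L)
    (huniq : ∀ q ∈ P, ∃! π : G.Path q.1 q.2, (π : G.Walk q.1 q.2).length = L)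
    (hdisj : ∀ q ∈ P, ∀ q' ∈ P, q ≠ q' →
      ∀ (π : G.Path q.1 q.2) (π' : G.Path q'.1 q'.2),
        (π : G.Walk q.1 q.2).length = L → (π' : G.Walk q'.1 q'.2).length = L →
        ∀ e ∈ (π : G.Walk q.1 q.2).edges, e ∉ (π' : G.Walk q'.1 q'.2).edges) :
    ∀ EH ⊆ layerEdges G L,
      (∀ q ∈ layerPairs L P,
        Reaches (EH : Set ((V × Fin (2 * L)) × (V × Fin (2 * L)))) q.1 q.2 ↔
        Reaches ((layerEdges G L : Set ((V × Fin (2 * L)) × (V × Fin (2 * L))))) q.1 q.2) →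
      P.card * L * (L - 1) ≤ EH.card := by
  classical
  intro EH hEH hpres
  set A : V × V → Finset ((V × Fin (2 * L)) × (V × Fin (2 * L))) := fun q => EH.filter fun e =>
    ∃ π : G.Path q.1 q.2, (π : G.Walk q.1 q.2).length = L ∧
      s(e.1.1, e.2.1) ∈ (π : G.Walk q.1 q.2).edges
  have hA_disj : (P : Set (V × V)).PairwiseDisjoint A := by
    intro q hq q' hq' hne
    refine disjoint_left.2 fun e he he' => ?_
    obtain ⟨-, π, hπ, heπ⟩ := mem_filter.1 he
    obtain ⟨-, π', hπ', heπ'⟩ := mem_filter.1 he'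
    exact hdisj q hq q' hq' hne π π' hπ hπ' _ heπ heπ'
  have hA_card : ∀ q ∈ P, L * L ≤ (A q).card := by
    intro q hq
    obtain ⟨π, hπL, hπuniq⟩ := huniq q hq
    calc L * L = L * (π : G.Walk q.1 q.2).length := by rw [hπL]
      _ ≤ (A q).card := mul_length_le_card_of_isLayerStep π.2 fun j hj i hi => ?_
    have hreach := (hpres ((q.1, ⟨j, by omega⟩), (q.2, ⟨j + L, by omega⟩))
      (by simp [layerPairs, hq, hj])).2 (reaches_layerEdges_of_walk π.1 (by simp [hπL]))
    obtain ⟨e, he, hstep⟩ :=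
      exists_layerStep_mem_of_reaches hEH (hdist q hq) hπuniq rfl hreach i (hπL ▸ hi)
    exact ⟨e, mem_filter.2 ⟨he, π, hπL, hstep.mk_mem_edges hi⟩, hstep⟩
  calc P.card * L * (L - 1) ≤ P.card * (L * L) := by rw [mul_assoc]; gcongr; omega
    _ ≤ ∑ q ∈ P, (A q).card := by
      simpa using card_nsmul_le_sum P (fun q => (A q).card) _ hA_card
    _ = (P.biUnion A).card := (card_biUnion hA_disj).symm
    _ ≤ EH.card := card_le_card (biUnion_subset.2 fun q _ => filter_subset _ _)

theorem layered_reachability_lower_bound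
    {V : Type*} [Fintype V] [DecidableEq V]
    (G : SimpleGraph V) [DecidableRel G.Adj]
    (L : ℕ) (hL : 2 ≤ L)
    (P : Finset (V × V))
    (hdist : ∀ q ∈ P, G.dist q.1 q.2 = L)
    (huniq : ∀ q ∈ P, ∃! π : G.Path q.1 q.2, (π : G.Walk q.1 q.2).length = L)
    (hdisj : ∀ q ∈ P, ∀ q' ∈ P, q ≠ q' →
      ∀ (π : G.Path q.1 q.2) (π' : G.Path q'.1 q'.2),
        (π : G.Walk q.1 q.2).length = L → (π' : G.Walk q'.1 q'.2).length = L →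
        ∀ e ∈ (π : G.Walk q.1 q.2).edges, e ∉ (π' : G.Walk q'.1 q'.2).edges) :
    ∀ EH ⊆ layerEdges G L,
      (∀ q ∈ layerPairs L P,
        Reaches (EH : Set ((V × Fin (2 * L)) × (V × Fin (2 * L)))) q.1 q.2 ↔
        Reaches ((layerEdges G L : Set ((V × Fin (2 * L)) × (V × Fin (2 * L))))) q.1 q.2) →
      P.card * L * (L - 1) ≤ EH.card :=
  layered_reachability_lower_bound_general G L P hdist huniq hdisj
end
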